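/- arXiv:1807.02375 — 2 statements merged into one kernel-verified Lean document; each statement's English description precedes it below -/
import Mathlib

section
/- Let r ≥ 1 and k ≥ 0 be integers, let A₀ = ℚ[x₁, …, x_r] be the multivariate polynomial ring, let f = x₁⋯x_r, and let A be the localization of A₀ away from f. For each 1 ≤ i ≤ r, let dᵢ : A → A be a derivation whose restriction along the localization map A₀ → A is the partial derivative ∂/∂xᵢ. Let M_k be the A₀-submodule of A generated by all elements (d_{i₁} ∘ ⋯ ∘ d_{i_j})(1/f) with 0 ≤ j ≤ k (allowing repetitions and any order of indices, the empty composition being the identity), and let J_k be the ideal of A₀ generated by the monomials x₁^{a₁}⋯x_r^{a_r} with 0 ≤ aᵢ ≤ k for all i and a₁ + ⋯ + a_r = k(r−1). Then M_k = { (the image in A of h)·(1/f)^{k+1} : h ∈ J_k }, i.e. M_k equals f^{−(k+1)} times the image of J_k in A. -/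
/-!
All the `xᵢ` are units in `A`, and the `dᵢ` act diagonally on the Laurent monomials
`∏ xᵢ^{-(cᵢ+1)}`: `dᵢ` multiplies such a monomial by `-(cᵢ+1)` and raises `cᵢ` by one.
Hence a composite of `j` of the derivations sends `1/f = ∏ xᵢ⁻¹` to a nonzero rational
multiple of the Laurent monomial whose exponent vector `c` counts the indices used, so `M_k`
is spanned by the Laurent monomials with `Σ cᵢ ≤ k`; those with `Σ cᵢ < k` are
`A₀`-multiples (by a power of `x₁`) of ones with `Σ cᵢ = k`. On the other side
`x^a f^{-(k+1)}` is the Laurent monomial with `c = k - a`, and for `a ≤ k` one has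
`Σ aᵢ = k(r-1)` exactly when `Σ cᵢ = k`.
-/

open MvPolynomial

noncomputable section

/-- The polynomial `f = x₁ ⋯ x_r` in `A₀ = ℚ[x₁, …, x_r]`. -/
def fProd (r : ℕ) : MvPolynomial (Fin r) ℚ := ∏ i, X i

/-- `A`, the localization of `A₀` away from `f`. -/
abbrev Aloc (r : ℕ) := Localization.Away (fProd r)

/-- The inverse `1/f` in `A` of the image of `f`. -/
def invF (r : ℕ) : Aloc r :=
  Ring.inverse (algebraMap (MvPolynomial (Fin r) ℚ) (Aloc r) (fProd r))

/-- Composite application `d_{i₁} ∘ ⋯ ∘ d_{i_j}` of the derivations indexed by a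
list, applied to an element of `A`; the empty list gives the identity. -/
def applyDerivs {r : ℕ} (d : Fin r → Derivation ℚ (Aloc r) (Aloc r)) :
    List (Fin r) → Aloc r → Aloc r
  | [], x => x
  | i :: l, x => d i (applyDerivs d l x)

theorem Derivation.leibniz_prod {R A M ι : Type*} [CommSemiring R] [CommSemiring A]
    [AddCommMonoid M] [Algebra R A] [Module A M] [Module R M] [DecidableEq ι]
    (D : Derivation R A M) (s : Finset ι) (g : ι → A) :
    D (∏ i ∈ s, g i) = ∑ i ∈ s, (∏ j ∈ s.erase i, g j) • D (g i) := by
  induction s using Finset.induction_on with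
  | empty => simp
  | insert a s ha ih =>
    rw [Finset.prod_insert ha, Finset.sum_insert ha, Finset.erase_insert ha, D.leibniz, ih,
      Finset.smul_sum, add_comm]
    congr 1
    refine Finset.sum_congr rfl fun i hi => ?_
    rw [Finset.erase_insert_of_ne (ne_of_mem_of_not_mem hi ha).symm,
      Finset.prod_insert fun h => ha (Finset.mem_of_mem_erase h), smul_smul]

theorem List.sum_count_eq_length {ι : Type*} [Fintype ι] [DecidableEq ι] (l : List ι) :
    ∑ i, l.count i = l.length := by
  simpa using Multiset.sum_count_eq_card (s := Finset.univ) (m := (l : Multiset ι)) (by simp)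

theorem List.exists_count_eq {ι : Type*} [Fintype ι] [DecidableEq ι] (c : ι → ℕ) :
    ∃ l : List ι, ∀ i, l.count i = c i :=
  ⟨(∑ i, Multiset.replicate (c i) i).toList, fun i => by
    rw [← Multiset.coe_count, Multiset.coe_toList]
    simp [Multiset.count_sum', Multiset.count_replicate]⟩

theorem pow_mul_pow_of_mul_eq_one {M : Type*} [CommMonoid M] {x u : M} (h : x * u = 1)
    {a n : ℕ} (ha : a ≤ n) : x ^ a * u ^ n = u ^ (n - a) := by
  rw [← Nat.sub_add_cancel ha, pow_add u, Nat.add_sub_cancel, mul_left_comm, ← mul_pow, h,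
    one_pow, mul_one]

theorem image_algebraMap_mul_ideal_span {R A : Type*} [CommSemiring R] [Semiring A]
    [Algebra R A] (y : A) (S : Set R) :
    (fun h => algebraMap R A h * y) '' (Ideal.span S : Set R) =
      Submodule.span R ((fun h => algebraMap R A h * y) '' S) := by
  have hmap : (fun h => algebraMap R A h * y) = (Algebra.linearMap R A).smulRight y := by
    funext h; rfl
  rw [hmap, ← Submodule.map_coe, Ideal.span, Submodule.map_span]

theorem Fintype.sum_eq_mul_card_sub_one_iff {ι : Type*} [Fintype ι] [Nonempty ι] {k : ℕ}
    {a c : ι → ℕ} (h : ∀ i, a i + c i = k) :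
    ∑ i, a i = k * (Fintype.card ι - 1) ↔ ∑ i, c i = k := by
  have hsum : ∑ i, a i + ∑ i, c i = k * (Fintype.card ι - 1) + k := by
    rw [← Finset.sum_add_distrib, Finset.sum_congr rfl fun i _ => h i, Finset.sum_const,
      Finset.card_univ, smul_eq_mul, ← Nat.sub_add_cancel Fintype.card_pos, Nat.add_sub_cancel]
    ring
  omega

namespace NormalCrossing

variable {r : ℕ}

def xInv (r : ℕ) (i : Fin r) : Aloc r :=
  Ring.inverse (algebraMap (MvPolynomial (Fin r) ℚ) (Aloc r) (X i))

theorem isUnit_algebraMap_X (i : Fin r) :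
    IsUnit (algebraMap (MvPolynomial (Fin r) ℚ) (Aloc r) (X i)) :=
  IsLocalization.Away.isUnit_of_dvd (fProd r) (Finset.dvd_prod_of_mem _ (Finset.mem_univ i))

theorem algebraMap_X_mul_xInv (i : Fin r) :
    algebraMap (MvPolynomial (Fin r) ℚ) (Aloc r) (X i) * xInv r i = 1 :=
  Ring.mul_inverse_cancel _ (isUnit_algebraMap_X i)

theorem invF_eq_prod_xInv : invF r = ∏ i, xInv r i := by
  have hf : algebraMap (MvPolynomial (Fin r) ℚ) (Aloc r) (fProd r) * ∏ i, xInv r i = 1 := by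
    simp [fProd, ← Finset.prod_mul_distrib, algebraMap_X_mul_xInv]
  simpa [invF] using (Ring.inverse_mul_eq_iff_eq_mul _ _ _
    (IsLocalization.Away.algebraMap_isUnit (fProd r))).2 hf.symm

def laurent (r : ℕ) (c : Fin r → ℕ) : Aloc r := ∏ i, xInv r i ^ (c i + 1)

theorem laurent_zero : laurent r 0 = invF r := by
  simp [laurent, invF_eq_prod_xInv]

theorem laurent_add_single (c : Fin r → ℕ) (i : Fin r) (n : ℕ) :
    laurent r (c + (Pi.single i n : Fin r → ℕ)) = xInv r i ^ n * laurent r c := by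
  have hsingle : xInv r i ^ n = ∏ j, xInv r j ^ (Pi.single i n : Fin r → ℕ) j := by
    rw [Fintype.prod_eq_single i fun j hj => by rw [Pi.single_eq_of_ne hj, pow_zero],
      Pi.single_eq_same]
  simp only [hsingle, laurent, ← Finset.prod_mul_distrib, ← pow_add, Pi.add_apply]
  exact Finset.prod_congr rfl fun j _ => by ring_nf

theorem algebraMap_X_pow_mul_laurent_add_single (c : Fin r → ℕ) (i : Fin r) (n : ℕ) :
    algebraMap (MvPolynomial (Fin r) ℚ) (Aloc r) (X i ^ n) *
      laurent r (c + (Pi.single i n : Fin r → ℕ)) = laurent r c := by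
  rw [laurent_add_single, ← mul_assoc, map_pow, ← mul_pow, algebraMap_X_mul_xInv, one_pow,
    one_mul]

theorem algebraMap_monomial_mul_invF_pow {k : ℕ} {a : Fin r → ℕ} (ha : ∀ i, a i ≤ k) :
    algebraMap (MvPolynomial (Fin r) ℚ) (Aloc r) (∏ i, X i ^ a i) * invF r ^ (k + 1) =
      laurent r (fun i => k - a i) := by
  rw [invF_eq_prod_xInv, ← Finset.prod_pow, map_prod, ← Finset.prod_mul_distrib, laurent]
  refine Finset.prod_congr rfl fun i _ => ?_
  have hai := ha i
  rw [map_pow, pow_mul_pow_of_mul_eq_one (algebraMap_X_mul_xInv i) (by omega)]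
  congr 1
  omega

theorem derivation_xInv_of_map_X_eq_one {D : Derivation ℚ (Aloc r) (Aloc r)} {i : Fin r}
    (hD : D (algebraMap (MvPolynomial (Fin r) ℚ) (Aloc r) (X i)) = 1) :
    D (xInv r i) = -xInv r i ^ 2 := by
  rw [D.leibniz_of_mul_eq_one ((mul_comm _ _).trans (algebraMap_X_mul_xInv i)), hD, smul_eq_mul,
    mul_one]

theorem derivation_xInv_of_map_X_eq_zero {D : Derivation ℚ (Aloc r) (Aloc r)} {i : Fin r}
    (hD : D (algebraMap (MvPolynomial (Fin r) ℚ) (Aloc r) (X i)) = 0) : D (xInv r i) = 0 := by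
  rw [D.leibniz_of_mul_eq_one ((mul_comm _ _).trans (algebraMap_X_mul_xInv i)), hD, smul_zero]

variable {d : Fin r → Derivation ℚ (Aloc r) (Aloc r)}

theorem derivation_laurent
    (hX : ∀ i j, d i (algebraMap (MvPolynomial (Fin r) ℚ) (Aloc r) (X j)) =
      algebraMap (MvPolynomial (Fin r) ℚ) (Aloc r) (pderiv i (X j)))
    (i : Fin r) (c : Fin r → ℕ) :
    d i (laurent r c) =
      -(((c i + 1 : ℕ) : ℚ) • laurent r (c + (Pi.single i 1 : Fin r → ℕ))) := by
  have hii : d i (xInv r i) = -xInv r i ^ 2 :=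
    derivation_xInv_of_map_X_eq_one (by rw [hX, pderiv_X_self, map_one])
  have hij : ∀ j ≠ i, d i (xInv r j) = 0 := fun j hj =>
    derivation_xInv_of_map_X_eq_zero (by rw [hX, pderiv_X_of_ne hj, map_zero])
  rw [laurent, Derivation.leibniz_prod, Finset.sum_eq_single i
      (fun j _ hj => by rw [Derivation.leibniz_pow, hij j hj]; simp)
      (fun h => absurd (Finset.mem_univ i) h),
    laurent_add_single, laurent, ← Finset.mul_prod_erase _ _ (Finset.mem_univ i),
    Derivation.leibniz_pow, hii]
  simp only [smul_eq_mul, nsmul_eq_mul, Nat.add_sub_cancel, Algebra.smul_def, map_natCast]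
  ring

theorem applyDerivs_invF
    (hX : ∀ i j, d i (algebraMap (MvPolynomial (Fin r) ℚ) (Aloc r) (X j)) =
      algebraMap (MvPolynomial (Fin r) ℚ) (Aloc r) (pderiv i (X j)))
    (l : List (Fin r)) :
    ∃ q : ℚ, q ≠ 0 ∧ applyDerivs d l (invF r) = q • laurent r (fun i => l.count i) := by
  induction l with
  | nil => exact ⟨1, one_ne_zero, by simp [applyDerivs, ← laurent_zero]; rfl⟩
  | cons a l ih =>
    obtain ⟨q, hq, h⟩ := ih
    have hcount : (fun i => (a :: l).count i) = (fun i => l.count i) + Pi.single a 1 := by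
      funext i
      simp only [List.count_cons, Pi.add_apply, Pi.single_apply, beq_iff_eq, eq_comm (a := a)]
    refine ⟨-((l.count a + 1 : ℕ) : ℚ) * q,
      mul_ne_zero (neg_ne_zero.2 (by positivity)) hq, ?_⟩
    rw [applyDerivs, h, Derivation.map_smul, derivation_laurent hX, hcount, smul_neg, neg_mul,
      neg_smul, mul_smul, smul_comm q]

theorem span_applyDerivs_invF
    (hX : ∀ i j, d i (algebraMap (MvPolynomial (Fin r) ℚ) (Aloc r) (X j)) =
      algebraMap (MvPolynomial (Fin r) ℚ) (Aloc r) (pderiv i (X j)))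
    (k : ℕ) :
    Submodule.span (MvPolynomial (Fin r) ℚ)
        {x | ∃ l : List (Fin r), l.length ≤ k ∧ x = applyDerivs d l (invF r)} =
      Submodule.span (MvPolynomial (Fin r) ℚ) (laurent r '' {c | ∑ i, c i ≤ k}) := by
  apply le_antisymm <;> rw [Submodule.span_le]
  · rintro _ ⟨l, hl, rfl⟩
    obtain ⟨q, -, hq⟩ := applyDerivs_invF hX l
    rw [SetLike.mem_coe, hq]
    refine Submodule.smul_of_tower_mem _ q (Submodule.subset_span ⟨_, ?_, rfl⟩)
    rwa [Set.mem_ofPred_eq, List.sum_count_eq_length]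
  · rintro _ ⟨c, hc, rfl⟩
    obtain ⟨l, hl⟩ := List.exists_count_eq c
    obtain ⟨q, hq0, hq⟩ := applyDerivs_invF hX l
    have hlc : (fun i => l.count i) = c := funext hl
    rw [hlc] at hq
    rw [SetLike.mem_coe, ← inv_smul_smul₀ hq0 (laurent r c), ← hq]
    refine Submodule.smul_of_tower_mem _ q⁻¹ (Submodule.subset_span ⟨l, ?_, rfl⟩)
    rwa [← List.sum_count_eq_length, hlc]

theorem span_laurent_sum_le_eq [NeZero r] (k : ℕ) :
    Submodule.span (MvPolynomial (Fin r) ℚ) (laurent r '' {c | ∑ i, c i ≤ k}) =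
      Submodule.span (MvPolynomial (Fin r) ℚ) (laurent r '' {c | ∑ i, c i = k}) := by
  refine le_antisymm (Submodule.span_le.2 ?_)
    (Submodule.span_mono (Set.image_mono fun c hc => le_of_eq hc))
  rintro _ ⟨c, hc, rfl⟩
  rw [SetLike.mem_coe, ← algebraMap_X_pow_mul_laurent_add_single c 0 (k - ∑ i, c i),
    ← Algebra.smul_def]
  refine Submodule.smul_mem _ _ (Submodule.subset_span ⟨_, ?_, rfl⟩)
  simp only [Set.mem_ofPred_eq, Pi.add_apply, Finset.sum_add_distrib, Finset.sum_pi_single',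
    Finset.mem_univ, if_true]
  exact Nat.add_sub_cancel' hc

theorem image_monomial_mul_invF_pow [NeZero r] (k : ℕ) :
    (fun h => algebraMap (MvPolynomial (Fin r) ℚ) (Aloc r) h * invF r ^ (k + 1)) ''
        {m | ∃ a : Fin r → ℕ,
          (∀ i, a i ≤ k) ∧ ∑ i, a i = k * (r - 1) ∧ m = ∏ i, X i ^ a i} =
      laurent r '' {c | ∑ i, c i = k} := by
  ext x
  constructor
  · rintro ⟨_, ⟨a, ha, hsum, rfl⟩, rfl⟩
    refine ⟨fun i => k - a i, ?_, (algebraMap_monomial_mul_invF_pow ha).symm⟩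
    have hiff := Fintype.sum_eq_mul_card_sub_one_iff fun i => Nat.add_sub_cancel' (ha i)
    rw [Fintype.card_fin] at hiff
    exact hiff.1 hsum
  · rintro ⟨c, hc, rfl⟩
    have hck : ∀ i, c i ≤ k := fun i =>
      hc ▸ Finset.single_le_sum (by simp) (Finset.mem_univ i)
    refine ⟨_, ⟨fun i => k - c i, fun i => Nat.sub_le k (c i), ?_, rfl⟩, ?_⟩
    · have hiff := Fintype.sum_eq_mul_card_sub_one_iff fun i => Nat.sub_add_cancel (hck i)
      rw [Fintype.card_fin] at hiff
      exact hiff.2 hc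
    · beta_reduce
      rw [algebraMap_monomial_mul_invF_pow fun i => Nat.sub_le k (c i)]
      congr
      funext i
      exact Nat.sub_sub_self (hck i)

end NormalCrossing

open NormalCrossing in
/-- Normal crossings computation of the Hodge filtration: for `f = x₁⋯x_r`, the
`A₀`-submodule of `A = A₀[1/f]` generated by the derivatives of order `≤ k` of
`1/f` equals `f^{-(k+1)}` times the image of the ideal generated by the
monomials `x₁^{a₁}⋯x_r^{a_r}` with `0 ≤ aᵢ ≤ k` and `Σ aᵢ = k(r−1)`. -/
theorem hodge_filtration_snc (r k : ℕ) (hr : 1 ≤ r)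
    (d : Fin r → Derivation ℚ (Aloc r) (Aloc r))
    (hd : ∀ (i : Fin r) (p : MvPolynomial (Fin r) ℚ),
      d i (algebraMap (MvPolynomial (Fin r) ℚ) (Aloc r) p) =
        algebraMap (MvPolynomial (Fin r) ℚ) (Aloc r) (pderiv i p)) :
    (Submodule.span (MvPolynomial (Fin r) ℚ)
        {x : Aloc r | ∃ l : List (Fin r), l.length ≤ k ∧ x = applyDerivs d l (invF r)} :
      Set (Aloc r)) =
    (fun h : MvPolynomial (Fin r) ℚ =>
        algebraMap (MvPolynomial (Fin r) ℚ) (Aloc r) h * invF r ^ (k + 1)) ''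
      (Ideal.span {m : MvPolynomial (Fin r) ℚ | ∃ a : Fin r → ℕ,
          (∀ i, a i ≤ k) ∧ (∑ i, a i) = k * (r - 1) ∧ m = ∏ i, X i ^ a i} :
        Set (MvPolynomial (Fin r) ℚ)) := by
  have : NeZero r := ⟨by omega⟩
  rw [image_algebraMap_mul_ideal_span, image_monomial_mul_invF_pow,
    span_applyDerivs_invF (fun i j => hd i (X j)), span_laurent_sum_le_eq]

end
end

section
/- Work in the polynomial ring ℚ[x, y]. For a rational number α, let J_α be the ideal generated by x³, x²y², xy³, and y⁴ − (2α+1)·x²·y. Then for any two rational numbers α ≠ α′ with 5/6 < α ≤ 1 and 5/6 < α′ ≤ 1, the ideals J_α and J_{α′} are incomparable: neither J_α ⊆ J_{α′} nor J_{α′} ⊆ J_α holds. -/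
/-! The generators of `J_α` are weighted homogeneous for the weights `(3, 2)`; in weighted
degree `8` the ideal only contains multiples of `y⁴ − c x²y`, with `c = 2α + 1`. We detect this
through the parametrization `t ↦ (c t³, c t²)` of the cusp `y³ = c x²`: it kills `y⁴ − c x²y`,
sends the other generators into `(t⁹)`, and sends `x²y` to `c³ t⁸ ∉ (t⁹)`. Hence `x²y ∉ J_α`,
while the difference of the last generators of `J_α` and `J_α'` is `2(α' − α) x²y`. -/

open MvPolynomial

noncomputable section

/-- The ideal `J_α = (x³, x²y², xy³, y⁴ − (2α+1)x²y)` in `ℚ[x, y]`, with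
`x = X 0` and `y = X 1`. -/
def Jideal (α : ℚ) : Ideal (MvPolynomial (Fin 2) ℚ) :=
  Ideal.span {X 0 ^ 3, X 0 ^ 2 * X 1 ^ 2, X 0 * X 1 ^ 3,
    X 1 ^ 4 - C (2 * α + 1) * X 0 ^ 2 * X 1}

def cuspParam (c : ℚ) : MvPolynomial (Fin 2) ℚ →ₐ[ℚ] Polynomial ℚ :=
  aeval ![Polynomial.C c * Polynomial.X ^ 3, Polynomial.C c * Polynomial.X ^ 2]

lemma Jideal_le_comap_cuspParam (α : ℚ) :
    Jideal α ≤ (Ideal.span {Polynomial.X ^ 9}).comap (cuspParam (2 * α + 1)) := by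
  set c := 2 * α + 1
  rw [Jideal, Ideal.span_le]
  rintro g (rfl | rfl | rfl | rfl) <;>
    simp only [SetLike.mem_coe, Ideal.mem_comap, Ideal.mem_span_singleton']
  · exact ⟨Polynomial.C (c ^ 3), by simp [cuspParam]; ring⟩
  · exact ⟨Polynomial.C (c ^ 4) * Polynomial.X, by simp [cuspParam]; ring⟩
  · exact ⟨Polynomial.C (c ^ 4), by simp [cuspParam]; ring⟩
  · exact ⟨0, by simp [cuspParam, c]; ring⟩

lemma X_zero_sq_mul_X_one_not_mem_Jideal {α : ℚ} (hα : 2 * α + 1 ≠ 0) :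
    X 0 ^ 2 * X 1 ∉ Jideal α := by
  intro hmem
  have hdvd :=
    Ideal.mem_span_singleton.mp (Ideal.mem_comap.mp (Jideal_le_comap_cuspParam α hmem))
  generalize 2 * α + 1 = c at hα hdvd
  have himage : cuspParam c (X 0 ^ 2 * X 1) = Polynomial.C (c ^ 3) * Polynomial.X ^ 8 := by
    simp [cuspParam]; ring
  rw [himage, Polynomial.X_pow_dvd_iff] at hdvd
  have hcoeff := hdvd 8 (by norm_num)
  rw [Polynomial.coeff_C_mul_X_pow, if_pos rfl] at hcoeff
  exact pow_ne_zero 3 hα hcoeff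

lemma Jideal_not_le {α α' : ℚ} (hne : α ≠ α') (hα' : 2 * α' + 1 ≠ 0) :
    ¬ Jideal α ≤ Jideal α' := by
  intro hle
  have hgen : X 1 ^ 4 - C (2 * α + 1) * X 0 ^ 2 * X 1 ∈ Jideal α' :=
    hle (Ideal.subset_span (by simp))
  have hgen' : X 1 ^ 4 - C (2 * α' + 1) * X 0 ^ 2 * X 1 ∈ Jideal α' :=
    Ideal.subset_span (by simp)
  have hdiff : C (2 * (α - α')) * (X 0 ^ 2 * X 1) ∈ Jideal α' := by
    have hC : (C (2 * (α - α')) : MvPolynomial (Fin 2) ℚ) = C (2 * α + 1) - C (2 * α' + 1) := by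
      rw [← map_sub]; ring_nf
    convert (Jideal α').sub_mem hgen' hgen using 1
    rw [hC]; ring
  have hunit : IsUnit (C (2 * (α - α')) : MvPolynomial (Fin 2) ℚ) :=
    (isUnit_iff_ne_zero.mpr (mul_ne_zero two_ne_zero (sub_ne_zero.mpr hne))).map C
  exact X_zero_sq_mul_X_one_not_mem_Jideal hα' ((Ideal.unit_mul_mem_iff_mem _ hunit).mp hdiff)

theorem Jideal_incomparable_general (α α' : ℚ) (hne : α ≠ α')
    (hα₁ : 5 / 6 < α) (hα'₁ : 5 / 6 < α') :
    ¬ Jideal α ≤ Jideal α' ∧ ¬ Jideal α' ≤ Jideal α :=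
  ⟨Jideal_not_le hne (by linarith), Jideal_not_le hne.symm (by linarith)⟩

/-- For `5/6 < α, α′ ≤ 1` with `α ≠ α′`, the ideals `J_α` and `J_{α′}` are
incomparable: neither contains the other. -/
theorem Jideal_incomparable (α α' : ℚ) (hne : α ≠ α')
    (hα₁ : 5 / 6 < α) (hα₂ : α ≤ 1) (hα'₁ : 5 / 6 < α') (hα'₂ : α' ≤ 1) :
    ¬ Jideal α ≤ Jideal α' ∧ ¬ Jideal α' ≤ Jideal α :=
  Jideal_incomparable_general α α' hne hα₁ hα'₁
end
end
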